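/- arXiv:2309.07859 — 3 statements merged into one kernel-verified Lean document; each statement's English description precedes it below -/
import Mathlib

section
/- Let f_1 = 1, f_2 = 13/42, f_3 = 1/6, f_4 = 2/21, f_5 = 1/21, f_6 = 1/84, and f_j = 0 for all j ≥ 7. Then for all integers i, j ≥ 1, i·(f_i − f_{i+1}) + (j−1)·(f_j − f_{j+1}) ≤ 5/6. -/
def f : ℕ → ℚ
  | 1 => 1
  | 2 => 13/42
  | 3 => 1/6
  | 4 => 2/21
  | 5 => 1/21
  | 6 => 1/84
  | _ => 0

lemma f_of_seven_le {n : ℕ} (hn : 7 ≤ n) : f n = 0 := by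
  obtain ⟨m, rfl⟩ := Nat.exists_eq_add_of_le' hn
  rfl

lemma f_sub_f_succ_of_seven_le {n : ℕ} (hn : 7 ≤ n) : f n - f (n + 1) = 0 := by
  rw [f_of_seven_le hn, f_of_seven_le (by omega), sub_self]

/- Both bounds are sharp: the first is attained at `i = 1`, the second at every `j ∈ {2, …, 5}`,
and `29/42 + 1/7 = 5/6`. -/
lemma natCast_mul_f_sub_f_succ_le (i : ℕ) : (i : ℚ) * (f i - f (i + 1)) ≤ 29 / 42 := by
  rcases le_or_gt 7 i with hi | hi
  · rw [f_sub_f_succ_of_seven_le hi]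
    norm_num
  · interval_cases i <;> norm_num [f]

lemma natCast_sub_one_mul_f_sub_f_succ_le {j : ℕ} (hj : 1 ≤ j) :
    ((j : ℚ) - 1) * (f j - f (j + 1)) ≤ 1 / 7 := by
  rcases le_or_gt 7 j with hj' | hj'
  · rw [f_sub_f_succ_of_seven_le hj']
    norm_num
  · interval_cases j <;> norm_num [f]

theorem stmt_0_general (i j : ℕ) (hj : 1 ≤ j) :
    (i : ℚ) * (f i - f (i + 1)) + ((j : ℚ) - 1) * (f j - f (j + 1)) ≤ 5 / 6 := by
  linarith [natCast_mul_f_sub_f_succ_le i, natCast_sub_one_mul_f_sub_f_succ_le hj]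

theorem stmt_0 (i j : ℕ) (hi : 1 ≤ i) (hj : 1 ≤ j) :
    (i : ℚ) * (f i - f (i + 1)) + ((j : ℚ) - 1) * (f j - f (j + 1)) ≤ 5 / 6 :=
  stmt_0_general i j hj
end

section
/- Let f_1 = 1, f_2 = 13/42, f_3 = 1/6, f_4 = 2/21, f_5 = 1/21, f_6 = 1/84, and f_j = 0 for all j ≥ 7. Then for all integers i ≥ 1, 2(i−1)·f_i + f_{2i+1} ≤ 2/3. -/
theorem f_eq_zero_of_le {j : ℕ} (hj : 7 ≤ j) : f j = 0 := by
  obtain ⟨k, rfl⟩ := Nat.exists_eq_add_of_le' hj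
  rfl

-- Equality holds at i = 2 and i = 3.
theorem stmt_1 (i : ℕ) (hi : 1 ≤ i) :
    2 * ((i : ℚ) - 1) * f i + f (2 * i + 1) ≤ 2 / 3 := by
  rcases le_or_gt i 6 with hi6 | hi7
  · interval_cases i <;> norm_num [f]
  · rw [f_eq_zero_of_le hi7, f_eq_zero_of_le (by omega)]
    norm_num
end

section
/- Let f be Vigoda's flip probabilities (f_1=1, f_2=13/42, f_3=1/6, f_4=2/21, f_5=1/21, f_6=1/84, f_j=0 for j≥7). For all integers a, b ≥ 1 with a ≤ b, a·f_a + (b−1)·f_b ≤ f_1 + 2·f_3 = 4/3. -/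
lemma f_eq_zero_of_seven_le {n : ℕ} (h : 7 ≤ n) : f n = 0 := by
  obtain ⟨k, rfl⟩ := Nat.exists_eq_add_of_le' h
  rfl

lemma mul_f_le_one (n : ℕ) : (n : ℚ) * f n ≤ 1 := by
  rcases le_or_gt n 6 with hn | hn
  · interval_cases n <;> norm_num [f]
  · simp [f_eq_zero_of_seven_le hn]

lemma sub_one_mul_f_le (n : ℕ) : ((n : ℚ) - 1) * f n ≤ 1 / 3 := by
  rcases le_or_gt n 6 with hn | hn
  · interval_cases n <;> norm_num [f]
  · simp [f_eq_zero_of_seven_le hn]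

lemma f_one_add_two_mul_f_three : f 1 + 2 * f 3 = 4 / 3 := by
  norm_num [f]

theorem stmt_4_general (a b : ℕ) :
    (a : ℚ) * f a + ((b : ℚ) - 1) * f b ≤ f 1 + 2 * f 3 ∧ f 1 + 2 * f 3 = 4 / 3 := by
  refine ⟨?_, f_one_add_two_mul_f_three⟩
  rw [f_one_add_two_mul_f_three]
  linarith [mul_f_le_one a, sub_one_mul_f_le b]

theorem stmt_4 (a b : ℕ) (ha : 1 ≤ a) (hab : a ≤ b) :
    (a : ℚ) * f a + ((b : ℚ) - 1) * f b ≤ f 1 + 2 * f 3 ∧ f 1 + 2 * f 3 = 4 / 3 :=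
  stmt_4_general a b
end
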